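/- Let X be a bead-set for a partition λ that is normalized with respect to s, and let q be the least integer with X ⊆ {0,1,…,qs−1}. Then the s-abacus of X exhibits horizontal anti-symmetry if and only if q is even, every component λ_(i) of the s-quotient of λ is self-conjugate, and each runner set X_i = {j ≥ 0 : i + js ∈ X} has exactly q/2 elements. -/
import Mathlib


/-- A partition: a weakly decreasing sequence of natural numbers (indexed from 0)
that is eventually zero.  `parts i` is the (i+1)-st largest part (0 if `i` exceeds
the number of parts). -/
structure NPartition where
  parts : ℕ → ℕ
  antitone : ∀ ⦃i j : ℕ⦄, i ≤ j → parts j ≤ parts i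
  eventually_zero : ∃ N, ∀ i, N ≤ i → parts i = 0

namespace NPartition

/-- The size of a partition: the sum of its parts. -/
noncomputable def size (lam : NPartition) : ℕ := ∑ᶠ i, lam.parts i

/-- The number of (positive) parts of a partition. -/
noncomputable def numParts (lam : NPartition) : ℕ := sInf {N | lam.parts N = 0}

/-- The conjugate partition: `conj.parts j` is the number of rows whose part exceeds `j`,
i.e. the length of column `j` of the Young diagram. -/
noncomputable def conj (lam : NPartition) : NPartition where
  parts := fun j => ((Finset.range lam.numParts).filter (fun i => j < lam.parts i)).card
  antitone := by
    intro a b hab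
    apply Finset.card_le_card
    intro x hx
    simp only [Finset.mem_filter] at hx ⊢
    exact ⟨hx.1, lt_of_le_of_lt hab hx.2⟩
  eventually_zero := by
    refine ⟨lam.parts 0, fun j hj => ?_⟩
    simp only [Finset.card_eq_zero, Finset.filter_eq_empty_iff]
    intro i _
    exact not_lt.mpr (le_trans (lam.antitone (Nat.zero_le i)) hj)

/-- The hook length of the box in row `i`, column `j` (both 0-indexed) of the Young
diagram: arm + leg + 1. -/
noncomputable def hookLength (lam : NPartition) (i j : ℕ) : ℕ :=
  (lam.parts i - (j + 1)) + (lam.conj.parts j - (i + 1)) + 1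

/-- `lam` is an `s`-core: no box of its Young diagram has hook length `s`. -/
noncomputable def IsCore (s : ℕ) (lam : NPartition) : Prop :=
  ∀ i j, j < lam.parts i → lam.hookLength i j ≠ s

/-- The empty partition. -/
def emptyP : NPartition := ⟨fun _ => 0, fun _ _ _ => le_rfl, ⟨0, fun _ _ => rfl⟩⟩

/-- The parts of the partition obtained from `lam` by removing the (rim) hook with
corner box `(i, j)` (0-indexed). -/
noncomputable def removeHookParts (lam : NPartition) (i j : ℕ) : ℕ → ℕ := fun r =>
  if r < i then lam.parts r
  else if r + 1 < lam.conj.parts j then lam.parts (r + 1) - 1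
  else if r + 1 = lam.conj.parts j then j
  else lam.parts r

/-- `mu` is obtained from `lam` by removing a single hook of length `s`. -/
noncomputable def RemoveHookStep (s : ℕ) (lam mu : NPartition) : Prop :=
  ∃ i j, j < lam.parts i ∧ lam.hookLength i j = s ∧
    ∀ r, mu.parts r = lam.removeHookParts i j r

/-- `core` is the `s`-core of `lam`: it is obtained from `lam` by repeatedly removing
hooks of length `s`, and no hook of length `s` remains. -/
noncomputable def HasSCore (s : ℕ) (lam core : NPartition) : Prop :=
  Relation.ReflTransGen (RemoveHookStep s) lam core ∧ IsCore s core

/-- The bead-set of `lam` with shift `k`: the set `{0, …, k-1} ∪ {h + k : h a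
first-column hook length of `lam`}`.  (The first-column hook length of row `i`
(0-indexed) is `parts i + (m - (i+1))` where `m` is the number of parts.) -/
noncomputable def beadSet (lam : NPartition) (k : ℕ) : Finset ℕ :=
  Finset.range k ∪ (Finset.range lam.numParts).image
    (fun i => lam.parts i + (lam.numParts - (i + 1)) + k)

/-- `X` is a bead-set for `lam`. -/
noncomputable def IsBeadSet (lam : NPartition) (X : Finset ℕ) : Prop :=
  ∃ k, X = lam.beadSet k

/-- The minimal bead-set of `lam` (shift `k = 0`), i.e. its set of first-column
hook lengths. -/
noncomputable def minBeadSet (lam : NPartition) : Finset ℕ := lam.beadSet 0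

/-- `X` is the bead-set of `lam` normalized with respect to `s`: the size of `X`
is divisible by `s`, with the least possible shift `k`. -/
noncomputable def IsNormalizedBeadSet (s : ℕ) (lam : NPartition) (X : Finset ℕ) : Prop :=
  ∃ k, X = lam.beadSet k ∧ (lam.beadSet k).card % s = 0 ∧
    ∀ k' < k, (lam.beadSet k').card % s ≠ 0

theorem ext' {a b : NPartition} (h : ∀ i, a.parts i = b.parts i) : a = b := by
  have h' : a.parts = b.parts := funext h
  cases a; cases b; simp_all

theorem parts_eq_zero_iff (lam : NPartition) (i : ℕ) :
    lam.parts i = 0 ↔ lam.numParts ≤ i := by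
  have hne : {N | lam.parts N = 0}.Nonempty := by
    obtain ⟨N, hN⟩ := lam.eventually_zero
    exact ⟨N, hN N le_rfl⟩
  constructor
  · exact fun h => Nat.sInf_le h
  · intro h
    have := Nat.sInf_mem hne
    exact Nat.le_zero.mp (this ▸ lam.antitone h)

theorem lt_conj_iff (lam : NPartition) (i j : ℕ) :
    i < lam.conj.parts j ↔ j < lam.parts i := by
  constructor
  · intro h
    by_contra hc
    push_neg at hc
    have hsub : (Finset.range lam.numParts).filter (fun r => j < lam.parts r)
        ⊆ Finset.range i := by
      intro r hr
      simp only [Finset.mem_filter, Finset.mem_range] at hr ⊢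
      by_contra hri
      push_neg at hri
      exact absurd (lt_of_lt_of_le hr.2 (lam.antitone hri)) (not_lt.mpr hc)
    have := Finset.card_le_card hsub
    simp only [Finset.card_range] at this
    exact absurd h (not_lt.mpr (le_trans (le_refl _) this))
  · intro h
    have hsub : Finset.range (i+1) ⊆
        (Finset.range lam.numParts).filter (fun r => j < lam.parts r) := by
      intro r hr
      simp only [Finset.mem_range] at hr
      have hri : r ≤ i := Nat.lt_succ_iff.mp hr
      have hpr : j < lam.parts r := lt_of_lt_of_le h (lam.antitone hri)
      have : r < lam.numParts := by
        by_contra hc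
        push_neg at hc
        have := (lam.parts_eq_zero_iff r).mpr hc
        omega
      simp only [Finset.mem_filter, Finset.mem_range]
      exact ⟨this, hpr⟩
    have := Finset.card_le_card hsub
    rw [Finset.card_range] at this
    exact lt_of_lt_of_le (Nat.lt_succ_self i) this

theorem key_ne (lam : NPartition) (i j : ℕ) :
    lam.parts i + lam.conj.parts j ≠ i + j + 1 := by
  by_cases h : j < lam.parts i
  · have h1 : i < lam.conj.parts j := (lam.lt_conj_iff i j).mpr h
    omega
  · push_neg at h
    have h1 : lam.conj.parts j ≤ i := by
      by_contra hc
      push_neg at hc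
      exact absurd ((lam.lt_conj_iff i j).mp hc) (not_lt.mpr h)
    omega

theorem conj_numParts (lam : NPartition) : lam.conj.numParts = lam.parts 0 := by
  have h1 : ∀ j, lam.conj.parts j = 0 ↔ lam.parts 0 ≤ j := by
    intro j
    have := lam.lt_conj_iff 0 j
    omega
  have hmem : lam.parts 0 ∈ {N | lam.conj.parts N = 0} := (h1 _).mpr le_rfl
  apply le_antisymm
  · exact Nat.sInf_le hmem
  · exact le_csInf ⟨_, hmem⟩ fun b hb => (h1 b).mp hb

theorem conj_parts_zero (lam : NPartition) : lam.conj.parts 0 = lam.numParts := by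
  have := lam.conj.parts_eq_zero_iff 0
  have h2 : lam.conj.conj.numParts = lam.conj.parts 0 := lam.conj.conj_numParts
  -- direct: conj.parts 0 = card of filter (0 < parts i) over range numParts = numParts
  show ((Finset.range lam.numParts).filter (fun i => 0 < lam.parts i)).card = lam.numParts
  rw [Finset.filter_true_of_mem, Finset.card_range]
  intro i hi
  simp only [Finset.mem_range] at hi
  have := (lam.parts_eq_zero_iff i).not
  omega


theorem beadSet_eq_image (lam : NPartition) (k : ℕ) :
    lam.beadSet k = (Finset.range (lam.numParts + k)).image
      (fun i => lam.parts i + (lam.numParts + k - 1 - i)) := by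
  set m := lam.numParts with hm
  set n := lam.numParts + k with hn
  ext x
  simp only [beadSet, Finset.mem_union, Finset.mem_range, Finset.mem_image]
  constructor
  · rintro (hx | ⟨i, hi, rfl⟩)
    · refine ⟨n - 1 - x, by omega, ?_⟩
      have h1 : lam.numParts ≤ n - 1 - x := by omega
      rw [(lam.parts_eq_zero_iff _).mpr h1]
      omega
    · refine ⟨i, by omega, by omega⟩
  · rintro ⟨i, hi, rfl⟩
    by_cases him : i < m
    · exact Or.inr ⟨i, him, by omega⟩
    · push_neg at him
      rw [(lam.parts_eq_zero_iff _).mpr him]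
      left; omega

theorem beadSet_card (lam : NPartition) (k : ℕ) :
    (lam.beadSet k).card = lam.numParts + k := by
  rw [beadSet_eq_image, Finset.card_image_of_injOn, Finset.card_range]
  intro i hi j hj hij
  simp only [Finset.coe_range, Set.mem_Iio] at hi hj
  have hij' : lam.parts i + (lam.numParts + k - 1 - i)
      = lam.parts j + (lam.numParts + k - 1 - j) := hij
  clear hij
  by_contra hne
  rcases Nat.lt_or_ge i j with h | h
  · have := lam.antitone (le_of_lt h); omega
  · have hji : j < i := by omega
    have := lam.antitone (le_of_lt hji); omega

theorem beadSet_lt (lam : NPartition) (k : ℕ) {x : ℕ} (hx : x ∈ lam.beadSet k) :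
    x < lam.numParts + k + lam.parts 0 := by
  rw [beadSet_eq_image] at hx
  simp only [Finset.mem_image, Finset.mem_range] at hx
  obtain ⟨i, hi, rfl⟩ := hx
  have := lam.antitone (Nat.zero_le i)
  omega

theorem fin_strictMono_add {n : ℕ} {f : Fin n → ℕ} (hf : StrictMono f) (a : Fin n) :
    ∀ (d : ℕ) (b : Fin n), (b : ℕ) = a + d → f a + d ≤ f b := by
  intro d
  induction d with
  | zero =>
    intro b hb
    have : a = b := Fin.ext (by omega)
    subst this; simp
  | succ d ih =>
    intro b hb
    have hlt : (a : ℕ) + d < n := by omega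
    have h1 := ih ⟨a + d, hlt⟩ rfl
    have h2 : (⟨(a : ℕ) + d, hlt⟩ : Fin n) < b := by
      rw [Fin.lt_def]; simp; omega
    have := hf h2
    omega

theorem fin_strictMono_le {n : ℕ} {f : Fin n → ℕ} (hf : StrictMono f) (a : Fin n) :
    (a : ℕ) ≤ f a := by
  have h0 : 0 < n := a.pos
  have hle : (⟨0, h0⟩ : Fin n) ≤ a := by rw [Fin.le_def]; simp
  have := fin_strictMono_add hf ⟨0, h0⟩ (a : ℕ) a (by simp)
  omega

theorem beadSet_parts_eq {lam mu : NPartition} {k k' : ℕ}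
    (h : lam.beadSet k = mu.beadSet k') : ∀ i, lam.parts i = mu.parts i := by
  set n := lam.numParts + k with hn
  have hn' : mu.numParts + k' = n := by
    have := congrArg Finset.card h
    rw [beadSet_card, beadSet_card] at this
    omega
  have hcard : (lam.beadSet k).card = n := lam.beadSet_card k
  set F : Fin n → ℕ := fun a => lam.parts (n - 1 - a) + a with hF
  set G : Fin n → ℕ := fun a => mu.parts (n - 1 - a) + a with hG
  have hFmem : ∀ a, F a ∈ lam.beadSet k := by
    intro a
    rw [beadSet_eq_image]
    refine Finset.mem_image.mpr ⟨n - 1 - (a : ℕ), Finset.mem_range.mpr (by omega), ?_⟩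
    have h2 : (lam.numParts + k) - 1 - (n - 1 - (a : ℕ)) = a := by omega
    rw [h2]
  have hGmem : ∀ a, G a ∈ lam.beadSet k := by
    intro a
    rw [h, beadSet_eq_image]
    refine Finset.mem_image.mpr ⟨n - 1 - (a : ℕ), Finset.mem_range.mpr (by omega), ?_⟩
    have h2 : (mu.numParts + k') - 1 - (n - 1 - (a : ℕ)) = a := by omega
    rw [h2]
  have hFmono : StrictMono F := by
    intro a b hab
    rw [Fin.lt_def] at hab
    have := lam.antitone (show n - 1 - (b:ℕ) ≤ n - 1 - (a:ℕ) by omega)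
    simp only [hF]
    omega
  have hGmono : StrictMono G := by
    intro a b hab
    rw [Fin.lt_def] at hab
    have := mu.antitone (show n - 1 - (b:ℕ) ≤ n - 1 - (a:ℕ) by omega)
    simp only [hG]
    omega
  have hFeq := Finset.orderEmbOfFin_unique hcard hFmem hFmono
  have hGeq := Finset.orderEmbOfFin_unique hcard hGmem hGmono
  have hFG : ∀ a : Fin n, F a = G a := by
    intro a; rw [hFeq, hGeq]
  intro i
  by_cases hi : i < n
  · have := hFG ⟨n - 1 - i, by omega⟩
    simp only [hF, hG] at this
    have h2 : n - 1 - (n - 1 - i) = i := by omega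
    rw [h2] at this
    omega
  · push_neg at hi
    rw [(lam.parts_eq_zero_iff i).mpr (by omega), (mu.parts_eq_zero_iff i).mpr (by omega)]

theorem exists_beadSet (Y : Finset ℕ) : ∃ (lam : NPartition) (k : ℕ), Y = lam.beadSet k := by
  set n := Y.card with hn
  set e := Y.orderEmbOfFin (rfl : Y.card = n) with he
  have hmono : StrictMono e := (Y.orderEmbOfFin rfl).strictMono
  have hge : ∀ a : Fin n, (a : ℕ) ≤ e a := fun a => fin_strictMono_le hmono a
  set p : ℕ → ℕ := fun i => if h : i < n then e ⟨n - 1 - i, by omega⟩ - (n - 1 - i) else 0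
    with hp
  have hanti : ∀ ⦃i j : ℕ⦄, i ≤ j → p j ≤ p i := by
    intro i j hij
    by_cases hj : j < n
    · have hi : i < n := by omega
      simp only [hp, dif_pos hi, dif_pos hj]
      have hle : (⟨n - 1 - j, by omega⟩ : Fin n) ≤ ⟨n - 1 - i, by omega⟩ := by
        rw [Fin.le_def]; simp; omega
      have hadd := fin_strictMono_add hmono ⟨n - 1 - j, by omega⟩
        ((n - 1 - i) - (n - 1 - j)) ⟨n - 1 - i, by omega⟩ (by simp; omega)
      have g1 := hge ⟨n - 1 - j, by omega⟩
      have g2 := hge ⟨n - 1 - i, by omega⟩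
      simp only at g1 g2 hadd
      omega
    · simp only [hp, dif_neg hj]
      exact Nat.zero_le _
  set lam : NPartition := ⟨p, hanti, ⟨n, fun i hi => by
    have hni : ¬ i < n := by omega
    simp only [hp]
    rw [dif_neg hni]⟩⟩
    with hlam
  have hnp : lam.numParts ≤ n := Nat.sInf_le (by
    show p n = 0
    simp only [hp, dif_neg (lt_irrefl n)])
  refine ⟨lam, n - lam.numParts, ?_⟩
  rw [beadSet_eq_image]
  have hnn : lam.numParts + (n - lam.numParts) = n := by omega
  rw [hnn]
  have hval : ∀ i (hi : i < n), p i + (n - 1 - i) = e ⟨n - 1 - i, by omega⟩ := by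
    intro i hi
    simp only [hp, dif_pos hi]
    have := hge ⟨n - 1 - i, by omega⟩
    simp only at this
    omega
  ext x
  simp only [Finset.mem_image, Finset.mem_range]
  constructor
  · intro hx
    have : x ∈ Set.range e := by
      rw [he, Finset.range_orderEmbOfFin]
      exact hx
    obtain ⟨a, ha⟩ := this
    refine ⟨n - 1 - (a : ℕ), by omega, ?_⟩
    show p _ + _ = x
    rw [hval _ (by omega)]
    rw [← ha]
    congr 1
    apply Fin.ext
    simp
    omega
  · rintro ⟨i, hi, rfl⟩
    show p i + _ ∈ Y
    rw [hval i hi]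
    exact Finset.orderEmbOfFin_mem Y rfl _


theorem beadSet_compl (lam : NPartition) (k N : ℕ)
    (hN : lam.numParts + k + lam.parts 0 ≤ N) :
    ∀ x < N, (x ∈ lam.beadSet k ↔
      N - 1 - x ∉ lam.conj.beadSet (N - (lam.numParts + k) - lam.parts 0)) := by
  set n := lam.numParts + k with hn
  set k' := N - n - lam.parts 0 with hk'
  set A := lam.beadSet k with hA
  set B := lam.conj.beadSet k' with hB
  have hcn : lam.conj.numParts = lam.parts 0 := lam.conj_numParts
  have hcz : lam.conj.parts 0 = lam.numParts := lam.conj_parts_zero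
  have hcardA : A.card = n := lam.beadSet_card k
  have hcardB : B.card = N - n := by
    rw [hB, beadSet_card, hcn]; omega
  have hAlt : ∀ x ∈ A, x < N := fun x hx => lt_of_lt_of_le (lam.beadSet_lt k hx) hN
  have hBlt : ∀ y ∈ B, y < N := by
    intro y hy
    have := lam.conj.beadSet_lt k' hy
    rw [hcn, hcz] at this
    have hnp : lam.numParts ≤ n := by omega
    omega
  set B' := B.image (fun y => N - 1 - y) with hB'
  have hcardB' : B'.card = N - n := by
    rw [hB', Finset.card_image_of_injOn, hcardB]
    intro a ha b hb hab
    simp only [Finset.mem_coe] at ha hb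
    have hab' : N - 1 - a = N - 1 - b := hab
    have h1 := hBlt a ha
    have h2 := hBlt b hb
    omega
  have hdisj : Disjoint A B' := by
    rw [Finset.disjoint_left]
    intro x hxA hxB'
    obtain ⟨y, hy, hxy⟩ := Finset.mem_image.mp hxB'
    have hyN := hBlt y hy
    rw [hA, beadSet_eq_image] at hxA
    obtain ⟨i, hi, hix⟩ := Finset.mem_image.mp hxA
    rw [Finset.mem_range] at hi
    rw [hB, beadSet_eq_image] at hy
    obtain ⟨j, hj, hjy⟩ := Finset.mem_image.mp hy
    rw [Finset.mem_range] at hj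
    have hix' : lam.parts i + (lam.numParts + k - 1 - i) = x := hix
    have hjy' : lam.conj.parts j + (lam.conj.numParts + k' - 1 - j) = y := hjy
    apply lam.key_ne i j
    omega
  have hsub : A ∪ B' ⊆ Finset.range N := by
    intro x hx
    rcases Finset.mem_union.mp hx with h | h
    · exact Finset.mem_range.mpr (hAlt x h)
    · obtain ⟨y, hy, hxy⟩ := Finset.mem_image.mp h
      have := hBlt y hy
      exact Finset.mem_range.mpr (by omega)
  have hUeq : A ∪ B' = Finset.range N := by
    apply Finset.eq_of_subset_of_card_le hsub
    rw [Finset.card_range, Finset.card_union_of_disjoint hdisj, hcardA, hcardB']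
    omega
  intro x hx
  have hxu : x ∈ A ∪ B' := by rw [hUeq]; exact Finset.mem_range.mpr hx
  constructor
  · intro hxA hxB
    have hxB' : x ∈ B' := Finset.mem_image.mpr ⟨N - 1 - x, hxB, by omega⟩
    exact (Finset.disjoint_left.mp hdisj hxA) hxB'
  · intro hxB
    rcases Finset.mem_union.mp hxu with h | h
    · exact h
    · exfalso
      obtain ⟨y, hy, hxy⟩ := Finset.mem_image.mp h
      have hyN := hBlt y hy
      have heq : y = N - 1 - x := by omega
      rw [heq] at hy
      exact hxB hy


theorem runner_sym_iff (Y : Finset ℕ) (q : ℕ) (hYq : ∀ y ∈ Y, y < q) :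
    (∀ j < q, (j ∈ Y ↔ q - 1 - j ∉ Y)) ↔
    (Even q ∧ (∀ mu : NPartition, mu.IsBeadSet Y → mu = mu.conj) ∧ Y.card = q / 2) := by
  have hcard_of_sym : (∀ j < q, (j ∈ Y ↔ q - 1 - j ∉ Y)) → 2 * Y.card = q := by
    intro hsym
    have hYeq : Y = (Finset.range q).filter (fun j => j ∈ Y) := by
      ext z
      simp only [Finset.mem_filter, Finset.mem_range]
      exact ⟨fun h => ⟨hYq z h, h⟩, fun h => h.2⟩
    have hsplit := Finset.card_filter_add_card_filter_not
      (s := Finset.range q) (p := fun j => j ∈ Y)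
    have hCim : (Finset.range q).filter (fun j => ¬ j ∈ Y) = Y.image (fun y => q - 1 - y) := by
      ext z
      simp only [Finset.mem_filter, Finset.mem_range, Finset.mem_image]
      constructor
      · rintro ⟨hzq, hz⟩
        refine ⟨q - 1 - z, ?_, by omega⟩
        have := hsym z hzq
        tauto
      · rintro ⟨y, hy, rfl⟩
        have hyq := hYq y hy
        have := hsym y hyq
        exact ⟨by omega, by tauto⟩
    have hCcard : ((Finset.range q).filter (fun j => ¬ j ∈ Y)).card = Y.card := by
      rw [hCim, Finset.card_image_of_injOn]
      intro a ha b hb hab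
      simp only [Finset.mem_coe] at ha hb
      have hab' : q - 1 - a = q - 1 - b := hab
      have := hYq a ha
      have := hYq b hb
      omega
    rw [hCcard] at hsplit
    conv_rhs at hsplit => rw [Finset.card_range]
    rw [← hYeq] at hsplit
    omega
  have hNgen : ∀ (mu : NPartition) (k : ℕ), Y = mu.beadSet k → Y.card ≤ q →
      mu.numParts + k + mu.parts 0 ≤ q := by
    intro mu k hk hle
    have hcard : Y.card = mu.numParts + k := by rw [hk, beadSet_card]
    by_cases h0 : mu.numParts = 0
    · have : mu.parts 0 = 0 := (mu.parts_eq_zero_iff 0).mpr (by omega)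
      omega
    · have hmem : mu.parts 0 + (mu.numParts + k - 1 - 0) ∈ mu.beadSet k := by
        rw [beadSet_eq_image]
        exact Finset.mem_image.mpr ⟨0, Finset.mem_range.mpr (by omega), rfl⟩
      rw [← hk] at hmem
      have := hYq _ hmem
      omega
  constructor
  · intro hsym
    have h2c := hcard_of_sym hsym
    refine ⟨⟨Y.card, by omega⟩, ?_, by omega⟩
    rintro mu ⟨k, hk⟩
    have hcard : Y.card = mu.numParts + k := by rw [hk, beadSet_card]
    have hN := hNgen mu k hk (by omega)
    have hcompl := mu.beadSet_compl k q hN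
    set B := mu.conj.beadSet (q - (mu.numParts + k) - mu.parts 0) with hB
    have hBlt : ∀ z ∈ B, z < q := by
      intro z hz
      have := mu.conj.beadSet_lt _ hz
      rw [mu.conj_numParts, mu.conj_parts_zero] at this
      omega
    have hYB : Y = B := by
      ext z
      by_cases hzq : z < q
      · have h1 := hcompl (q - 1 - z) (by omega)
        have h2 : q - 1 - (q - 1 - z) = z := by omega
        rw [h2] at h1
        rw [← hk] at h1
        have h3 := hsym (q - 1 - z) (by omega)
        rw [h2] at h3
        tauto
      · constructor
        · intro h; exact absurd (hYq z h) hzq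
        · intro h; exact absurd (hBlt z h) hzq
    rw [hk] at hYB
    exact ext' (beadSet_parts_eq hYB)
  · rintro ⟨hEven, hconj, hcard⟩ j hj
    obtain ⟨mu, k, hk⟩ := exists_beadSet Y
    have hmu : mu = mu.conj := hconj mu ⟨k, hk⟩
    have hcard' : Y.card = mu.numParts + k := by rw [hk, beadSet_card]
    have hq2 : 2 * (q / 2) = q := by
      obtain ⟨r, hr⟩ := hEven; omega
    have hN := hNgen mu k hk (by omega)
    have hcompl := mu.beadSet_compl k q hN
    set k'' := q - (mu.numParts + k) - mu.parts 0 with hk''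
    have hcardB : (mu.conj.beadSet k'').card = q - (mu.numParts + k) := by
      rw [beadSet_card, mu.conj_numParts]; omega
    have hkk : mu.conj.numParts + k'' = mu.numParts + k := by
      rw [mu.conj_numParts]
      omega
    have hBY : mu.conj.beadSet k'' = Y := by
      rw [hk]
      have h1 : mu.conj.numParts = mu.numParts := by rw [← hmu]
      have h2 : k'' = k := by omega
      rw [h2, ← hmu]
    have h3 := hcompl j hj
    rw [← hk, hBY] at h3
    exact h3

end NPartition

/-- Runner `i` of the `s`-abacus of the bead-set `X`:  `X_i = {j : i + j·s ∈ X}`. -/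
def runner (s i : ℕ) (X : Finset ℕ) : Finset ℕ :=
  (Finset.range (X.sup id + 1)).filter (fun j => i + j * s ∈ X)

/-- The staircase partition `τ_ℓ = (ℓ, ℓ-1, …, 1)`. -/
def staircase (l : ℕ) : NPartition :=
  ⟨fun i => l - i, fun _ _ hij => Nat.sub_le_sub_left hij l,
   ⟨l, fun i hi => Nat.sub_eq_zero_of_le hi⟩⟩

/-- `P_{s,t}`: the set of positive integers not expressible as a nonnegative integer
combination of `s` and `t`. -/
def Pst (s t : ℕ) : Set ℕ := {n | 0 < n ∧ ¬ ∃ a b : ℕ, n = a * s + b * t}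


/-- Let `X` be a bead-set for `λ` normalized with respect to `s`, and `q`
the least integer with `X ⊆ {0, …, qs - 1}`.  The `s`-abacus of `X` exhibits horizontal
anti-symmetry iff `q` is even, every component `λ_(i)` of the `s`-quotient is
self-conjugate, and each runner `X_i` has exactly `q/2` elements. -/
theorem horizontal_antisymmetry_characterization (s : ℕ) (lam : NPartition)
    (X : Finset ℕ) (q : ℕ)
    (hX : NPartition.IsNormalizedBeadSet s lam X)
    (hq : IsLeast {q' : ℕ | ∀ x ∈ X, x < q' * s} q) :
    (∀ i < s, ∀ j < q, (i + j * s ∈ X ↔ i + (q - 1 - j) * s ∉ X)) ↔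
      (Even q ∧
       (∀ i < s, ∀ mu : NPartition, mu.IsBeadSet (runner s i X) → mu = mu.conj) ∧
       (∀ i < s, (runner s i X).card = q / 2)) := by
  clear hX
  obtain ⟨hq1, hq2⟩ := hq
  by_cases hs0 : s = 0
  · subst hs0
    have hX0 : X = ∅ := by
      by_contra h
      obtain ⟨x, hx⟩ := Finset.nonempty_iff_ne_empty.mpr h
      have := hq1 x hx
      omega
    have hq0 : q = 0 := by
      have h0 : (0 : ℕ) ∈ {q' : ℕ | ∀ x ∈ X, x < q' * 0} := by
        intro x hx
        rw [hX0] at hx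
        exact absurd hx (Finset.notMem_empty x)
      exact Nat.le_zero.mp (hq2 h0)
    subst hq0
    constructor
    · intro _
      exact ⟨Even.zero, fun i hi => absurd hi (Nat.not_lt_zero i),
        fun i hi => absurd hi (Nat.not_lt_zero i)⟩
    · intro _ i hi
      exact absurd hi (Nat.not_lt_zero i)
  · have hs : 0 < s := Nat.pos_of_ne_zero hs0
    have hrun : ∀ i j : ℕ, j ∈ runner s i X ↔ i + j * s ∈ X := by
      intro i j
      simp only [runner, Finset.mem_filter, Finset.mem_range]
      constructor
      · exact fun h => h.2
      · intro h
        refine ⟨?_, h⟩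
        have h1 : i + j * s ≤ X.sup id := Finset.le_sup (f := id) h
        have h2 : j * 1 ≤ j * s := Nat.mul_le_mul_left j hs
        omega
    have hYq : ∀ i, i < s → ∀ y ∈ runner s i X, y < q := by
      intro i hi y hy
      have hx := hq1 _ ((hrun i y).mp hy)
      by_contra hc
      push_neg at hc
      have : q * s ≤ y * s := Nat.mul_le_mul_right s hc
      omega
    have hiff : ∀ i, i < s →
        ((∀ j < q, (j ∈ runner s i X ↔ q - 1 - j ∉ runner s i X)) ↔
         (∀ j < q, (i + j * s ∈ X ↔ i + (q - 1 - j) * s ∉ X))) := by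
      intro i hi
      simp only [hrun]
    constructor
    · intro hHA
      have hper : ∀ i, i < s → (Even q ∧
          (∀ mu : NPartition, mu.IsBeadSet (runner s i X) → mu = mu.conj) ∧
          (runner s i X).card = q / 2) := by
        intro i hi
        rw [← NPartition.runner_sym_iff _ q (hYq i hi), hiff i hi]
        exact fun j hj => hHA i hi j hj
      refine ⟨(hper 0 hs).1, fun i hi => (hper i hi).2.1, fun i hi => (hper i hi).2.2⟩
    · rintro ⟨hEv, hconj, hcards⟩ i hi j hj
      have h1 := (NPartition.runner_sym_iff _ q (hYq i hi)).mpr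
        ⟨hEv, hconj i hi, hcards i hi⟩
      exact (hiff i hi).mp h1 j hj
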